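/- Let X₁ and X₂ be degree-similar finite simple graphs on n vertices, and let Y₁ and Y₂ be degree-similar finite simple graphs on m vertices. Then the Cartesian products X₁ □ Y₁ and X₂ □ Y₂ are degree similar. -/

import Mathlib

open Matrix

open Classical in
noncomputable def adjMat {V : Type*} (G : SimpleGraph V) : Matrix V V ℝ :=
  Matrix.of fun a b => if G.Adj a b then 1 else 0

noncomputable def gdeg {V : Type*} (G : SimpleGraph V) (v : V) : ℕ :=
  Nat.card (G.neighborSet v)

noncomputable def degMat {V : Type*} [DecidableEq V] (G : SimpleGraph V) : Matrix V V ℝ :=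
  Matrix.diagonal fun v => (gdeg G v : ℝ)

/-- Two graphs (on possibly different vertex types of the same cardinality) are
degree similar if there is an invertible real matrix conjugating the adjacency
matrix of the first to that of the second, and likewise for the degree matrices. -/
def DegreeSimilar {V W : Type*} [Fintype V] [Fintype W] [DecidableEq V] [DecidableEq W]
    (G : SimpleGraph V) (H : SimpleGraph W) : Prop :=
  ∃ (e : V ≃ W) (M : Matrix V V ℝ), IsUnit M ∧
    M⁻¹ * adjMat G * M = (adjMat H).submatrix ⇑e ⇑e ∧
    M⁻¹ * degMat G * M = (degMat H).submatrix ⇑e ⇑e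

/-- The Cartesian product of graphs. -/
def cartProd {V W : Type*} (G : SimpleGraph V) (H : SimpleGraph W) :
    SimpleGraph (V × W) :=
  SimpleGraph.fromRel fun a b =>
    (a.1 = b.1 ∧ H.Adj a.2 b.2) ∨ (a.2 = b.2 ∧ G.Adj a.1 b.1)

/-- The tensor product of graphs. -/
def tensorProd {V W : Type*} (G : SimpleGraph V) (H : SimpleGraph W) :
    SimpleGraph (V × W) :=
  SimpleGraph.fromRel fun a b => G.Adj a.1 b.1 ∧ H.Adj a.2 b.2

/-- The strong product of graphs. -/
def strongProd {V W : Type*} (G : SimpleGraph V) (H : SimpleGraph W) :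
    SimpleGraph (V × W) :=
  SimpleGraph.fromRel fun a b =>
    (a.1 = b.1 ∧ H.Adj a.2 b.2) ∨ (a.2 = b.2 ∧ G.Adj a.1 b.1) ∨
      (G.Adj a.1 b.1 ∧ H.Adj a.2 b.2)

/-- The lexicographic product of graphs. -/
def lexProd {V W : Type*} (G : SimpleGraph V) (H : SimpleGraph W) :
    SimpleGraph (V × W) :=
  SimpleGraph.fromRel fun a b =>
    G.Adj a.1 b.1 ∨ (a.1 = b.1 ∧ H.Adj a.2 b.2)

/-! Both the adjacency and the degree matrix of `X □ Y` are Kronecker sums `A ⊗ 1 + 1 ⊗ B` of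
the corresponding matrices of the factors, and conjugating a Kronecker sum by `M ⊗ N` conjugates
the two summands by `M` and `N` separately. So the Kronecker product of the two similarity
matrices witnesses degree similarity of the products. -/

open Kronecker SimpleGraph

lemma cartProd_eq_boxProd {V W : Type*} (G : SimpleGraph V) (H : SimpleGraph W) :
    cartProd G H = G □ H := by
  ext ⟨u, v⟩ ⟨u', v'⟩
  simp only [cartProd, fromRel_adj, boxProd_adj, ne_eq, Prod.mk.injEq]
  constructor
  · rintro ⟨-, (⟨rfl, h⟩ | ⟨rfl, h⟩) | (⟨rfl, h⟩ | ⟨rfl, h⟩)⟩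
    exacts [Or.inr ⟨h, rfl⟩, Or.inl ⟨h, rfl⟩, Or.inr ⟨h.symm, rfl⟩, Or.inl ⟨h.symm, rfl⟩]
  · rintro (⟨h, rfl⟩ | ⟨h, rfl⟩)
    · exact ⟨fun h' => G.ne_of_adj h h'.1, Or.inl (Or.inr ⟨rfl, h⟩)⟩
    · exact ⟨fun h' => H.ne_of_adj h h'.2, Or.inl (Or.inl ⟨rfl, h⟩)⟩

lemma gdeg_eq_degree {V : Type*} [Fintype V] (G : SimpleGraph V) [DecidableRel G.Adj] (v : V) :
    gdeg G v = G.degree v := by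
  rw [gdeg, Nat.card_eq_fintype_card, card_neighborSet_eq_degree]

lemma gdeg_cartProd {V W : Type*} [Fintype V] [Fintype W]
    (G : SimpleGraph V) (H : SimpleGraph W) (x : V × W) :
    gdeg (cartProd G H) x = gdeg G x.1 + gdeg H x.2 := by
  classical
  rw [cartProd_eq_boxProd, gdeg_eq_degree, gdeg_eq_degree, gdeg_eq_degree, degree_boxProd]

lemma adjMat_cartProd {V W : Type*} [DecidableEq V] [DecidableEq W]
    (G : SimpleGraph V) (H : SimpleGraph W) :
    adjMat (cartProd G H) = adjMat G ⊗ₖ (1 : Matrix W W ℝ) + (1 : Matrix V V ℝ) ⊗ₖ adjMat H := by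
  classical
  rw [cartProd_eq_boxProd]
  ext ⟨u, v⟩ ⟨u', v'⟩
  simp only [adjMat, boxProd_adj, Matrix.add_apply, kroneckerMap_apply, one_apply, of_apply]
  by_cases hu : u = u' <;> by_cases hv : v = v' <;> simp [hu, hv]

lemma degMat_cartProd {V W : Type*} [Fintype V] [Fintype W] [DecidableEq V] [DecidableEq W]
    (G : SimpleGraph V) (H : SimpleGraph W) :
    degMat (cartProd G H) = degMat G ⊗ₖ (1 : Matrix W W ℝ) + (1 : Matrix V V ℝ) ⊗ₖ degMat H := by
  simp only [degMat, ← diagonal_one, diagonal_kronecker_diagonal, diagonal_add, gdeg_cartProd,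
    Nat.cast_add, mul_one, one_mul]

namespace Matrix

variable {R m n m' n' : Type*} [CommRing R] [DecidableEq m] [DecidableEq n]

lemma submatrix_kroneckerSum [DecidableEq m'] [DecidableEq n'] (A : Matrix m' m' R)
    (B : Matrix n' n' R) (e : m ≃ m') (f : n ≃ n') :
    (A ⊗ₖ 1 + 1 ⊗ₖ B).submatrix (e.prodCongr f) (e.prodCongr f) =
      A.submatrix e e ⊗ₖ 1 + 1 ⊗ₖ B.submatrix f f := by
  ext ⟨a, b⟩ ⟨c, d⟩
  simp [one_apply]

lemma conj_kroneckerSum [Fintype m] [Fintype n] {M : Matrix m m R} {N : Matrix n n R}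
    (hM : IsUnit M) (hN : IsUnit N) (A : Matrix m m R) (B : Matrix n n R) :
    (M ⊗ₖ N)⁻¹ * (A ⊗ₖ 1 + 1 ⊗ₖ B) * (M ⊗ₖ N) = (M⁻¹ * A * M) ⊗ₖ 1 + 1 ⊗ₖ (N⁻¹ * B * N) := by
  have hMM : M⁻¹ * M = 1 := nonsing_inv_mul M (M.isUnit_iff_isUnit_det.mp hM)
  have hNN : N⁻¹ * N = 1 := nonsing_inv_mul N (N.isUnit_iff_isUnit_det.mp hN)
  rw [inv_kronecker, mul_add, add_mul, ← mul_kronecker_mul, ← mul_kronecker_mul,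
    ← mul_kronecker_mul, ← mul_kronecker_mul, mul_one, mul_one, hMM, hNN]

end Matrix

/-- Degree-similar factors give degree-similar Cartesian products. -/
theorem degreeSimilar_cartProd {V W : Type*} [Fintype V] [Fintype W]
    [DecidableEq V] [DecidableEq W]
    (X₁ X₂ : SimpleGraph V) (Y₁ Y₂ : SimpleGraph W)
    (hX : DegreeSimilar X₁ X₂) (hY : DegreeSimilar Y₁ Y₂)  :
    DegreeSimilar (cartProd X₁ Y₁) (cartProd X₂ Y₂) := by
  obtain ⟨e, M, hM, hMA, hMD⟩ := hX
  obtain ⟨f, N, hN, hNA, hND⟩ := hY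
  refine ⟨e.prodCongr f, M ⊗ₖ N, hM.kronecker hN, ?_, ?_⟩
  · rw [adjMat_cartProd, adjMat_cartProd, conj_kroneckerSum hM hN, hMA, hNA,
      submatrix_kroneckerSum]
  · rw [degMat_cartProd, degMat_cartProd, conj_kroneckerSum hM hN, hMD, hND,
      submatrix_kroneckerSum]
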